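/- arXiv:2401.02064 — 2 statements merged into one kernel-verified Lean document; each statement's English description precedes it below -/
import Mathlib

section
/- Let k be a field, T_dg a pretriangulated dg category with T = H^0(T_dg), and K an extension-closed full dg subcategory of T_dg such that the inherited exact structure on H^0(K) is Frobenius. Let P be the full dg subcategory of K consisting of the projective objects and let I ⊆ P be an additive full dg subcategory which is covariantly finite in T. Assume P is connective. Then the triple (K,P,I) is d-precluster tilting for every d ≥ 0; in particular Hom_T(Q, Σ^i K) = 0 and Hom_T(K, Σ^i Q) = 0 for every i ≥ 1, Q ∈ P and K ∈ K. -/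
/-!
Dimension shifting. For `Q ∈ P` and `K₀ ∈ K`, a conflation `K₀ → Q' → K₁` with `Q'`
projective-injective gives an exact sequence
`Hom(Q, ΣⁿK₁) → Hom(Q, Σⁿ⁺¹K₀) → Hom(Q, Σⁿ⁺¹Q')`, whose outer terms vanish by induction on
`n` and by connectivity of `P`; the base case `n = 1` is projectivity of `Q`. Dually, a
conflation `K₁ → Q' → K₀` with `Q'` projective kills `Hom(K₀, Σⁿ⁺¹Q)`, the base case being
injectivity of `Q`. The other axioms of a precluster tilting triple are hypotheses in disguise:
covariant finiteness in `T` restricts to `B^{(d)}`, and (5) is "enough projectives".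
-/

open CategoryTheory Category Limits Pretriangulated ZeroObject

universe v u

namespace PaperIS

variable {C : Type u} [Category.{v} C] [Preadditive C] [HasZeroObject C]
  [HasShift C ℤ] [∀ n : ℤ, (CategoryTheory.shiftFunctor C n).Additive] [Pretriangulated C]
  [HasBinaryBiproducts C]

/-- The extension subcategory `X * Y` of a pretriangulated category. -/
def Star (X Y : Set C) : Set C :=
  {Z | ∃ A ∈ X, ∃ B ∈ Y, ∃ (f : A ⟶ Z) (g : Z ⟶ B) (h : B ⟶ A⟦(1:ℤ)⟧),
    Triangle.mk f g h ∈ distTriang C}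

/-- The class of objects isomorphic to an `n`-fold shift of an object of `S`. -/
def shiftSet (S : Set C) (n : ℤ) : Set C :=
  {Z | ∃ A ∈ S, Nonempty (Z ≅ A⟦n⟧)}

/-- `iterStar S n` is `S * ΣS * ⋯ * Σ^n S`. -/
def iterStar (S : Set C) : ℕ → Set C
  | 0 => S
  | n + 1 => Star (iterStar S n) (shiftSet S ((n : ℤ) + 1))

/-- `ker Ext^{≥1}(-, I)`. -/
def extPerp (I : Set C) : Set C :=
  {X | ∀ n : ℤ, 1 ≤ n → ∀ Y ∈ I, ∀ f : X ⟶ Y⟦n⟧, f = 0}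

/-- The subcategory `B^{(n)}_{K,P,I} = (K * ΣK * ⋯ * Σ^n K) ∩ ker Ext^{≥1}(-, I)`. -/
def Bcat (K I : Set C) (n : ℕ) : Set C := iterStar K n ∩ extPerp I

/-- `H^0(I)` is covariantly finite in `H^0(S)`: every object of `S` admits a left
`I`-approximation. -/
def CovFinite (I S : Set C) : Prop :=
  ∀ X ∈ S, ∃ I₀ ∈ I, ∃ f : X ⟶ I₀, ∀ I₁ ∈ I, ∀ g : X ⟶ I₁, ∃ h : I₀ ⟶ I₁, f ≫ h = g

/-- A class of objects is an additive subcategory if it is closed under isomorphisms,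
finite direct sums and direct summands. -/
structure IsAdditiveSub (S : Set C) : Prop where
  isoClosed : ∀ {X Y : C}, (X ≅ Y) → X ∈ S → Y ∈ S
  zeroMem : (0 : C) ∈ S
  sumMem : ∀ {X Y : C}, X ∈ S → Y ∈ S → (X ⊞ Y) ∈ S
  summandMem : ∀ {X Y : C}, (X ⊞ Y) ∈ S → X ∈ S

/-- Closure of `S` under kernels of retractions (= direct summands, up to isomorphism). -/
def retractClosure (S : Set C) : Set C :=
  {X | ∃ Y : C, ∃ Z ∈ S, Nonempty ((X ⊞ Y) ≅ Z)}

/-- `Q` is a projective object of the extriangulated category `H^0(B)`. -/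
def IsProjIn (B : Set C) (Q : C) : Prop :=
  Q ∈ B ∧ ∀ Y ∈ B, ∀ f : Q ⟶ Y⟦(1:ℤ)⟧, f = 0

/-- `Q` is an injective object of the extriangulated category `H^0(B)`. -/
def IsInjIn (B : Set C) (Q : C) : Prop :=
  Q ∈ B ∧ ∀ Y ∈ B, ∀ f : Y ⟶ Q⟦(1:ℤ)⟧, f = 0

/-- The extriangulated category `H^0(B)` has enough projectives. -/
def HasEnoughProjIn (B : Set C) : Prop :=
  ∀ X ∈ B, ∃ Q X₁ : C, IsProjIn B Q ∧ X₁ ∈ B ∧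
    ∃ (f : X₁ ⟶ Q) (g : Q ⟶ X) (h : X ⟶ X₁⟦(1:ℤ)⟧), Triangle.mk f g h ∈ distTriang C

/-- The extriangulated category `H^0(B)` has enough injectives. -/
def HasEnoughInjIn (B : Set C) : Prop :=
  ∀ X ∈ B, ∃ Q X₁ : C, IsInjIn B Q ∧ X₁ ∈ B ∧
    ∃ (f : X ⟶ Q) (g : Q ⟶ X₁) (h : X₁ ⟶ X⟦(1:ℤ)⟧), Triangle.mk f g h ∈ distTriang C

/-- The extriangulated category `H^0(B)` has dominant dimension `≥ n`: every projective
admits `n` successive conflations with projective-injective middle terms. -/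
def DomDimGE (B : Set C) (n : ℕ) : Prop :=
  ∀ Q : C, IsProjIn B Q → ∃ Ys : ℕ → C, Ys 0 = Q ∧
    ∀ k < n, Ys k ∈ B ∧ Ys (k+1) ∈ B ∧ ∃ Ik : C, IsProjIn B Ik ∧ IsInjIn B Ik ∧
      ∃ (f : Ys k ⟶ Ik) (g : Ik ⟶ Ys (k+1)) (h : Ys (k+1) ⟶ (Ys k)⟦(1:ℤ)⟧),
        Triangle.mk f g h ∈ distTriang C

/-- The extriangulated category `H^0(B)` is `d`-minimal Auslander--Gorenstein. -/
def IsDMinAG (B : Set C) (d : ℕ) : Prop :=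
  HasEnoughProjIn B ∧
  (∀ Q : C, IsProjIn B Q → ∀ X ∈ B, ∀ f : X ⟶ Q⟦(d + 2 : ℤ)⟧, f = 0) ∧
  DomDimGE B (d+1)

/-- A `d`-precluster tilting triple `(K, P, I)`, formulated inside the ambient
pretriangulated category `C`, which plays the role of `pretr(K)`. -/
structure PreclusterTriple (C : Type u) [Category.{v} C] [Preadditive C] [HasZeroObject C]
    [HasShift C ℤ] [∀ n : ℤ, (CategoryTheory.shiftFunctor C n).Additive] [Pretriangulated C]
    [HasBinaryBiproducts C] (d : ℕ) where
  K : Set C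
  P : Set C
  I : Set C
  I_sub_P : I ⊆ P
  P_sub_K : P ⊆ K
  addK : IsAdditiveSub K
  addP : IsAdditiveSub P
  addI : IsAdditiveSub I
  /-- (1) `P` is connective. -/
  connP : ∀ X ∈ P, ∀ Y ∈ P, ∀ n : ℤ, 1 ≤ n → ∀ f : X ⟶ Y⟦n⟧, f = 0
  /-- (2) `H^0(I)` is covariantly finite in `H^0(B^{(d)}_{K,P,I})`. -/
  covFin : CovFinite I (Bcat K I d)
  /-- (3) `K` is extension-closed in `tr(K)`. -/
  extClosedK : Star K K ⊆ K
  /-- (4) `Hom(P, Σ^{≥1} K) = 0`. -/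
  vanishPK : ∀ X ∈ P, ∀ Y ∈ K, ∀ n : ℤ, 1 ≤ n → ∀ f : X ⟶ Y⟦n⟧, f = 0
  /-- (4) `Hom(K, Σ^{≥1} P) = 0`. -/
  vanishKP : ∀ X ∈ K, ∀ Y ∈ P, ∀ n : ℤ, 1 ≤ n → ∀ f : X ⟶ Y⟦n⟧, f = 0
  /-- (5) every object of `K` is the cone of a map `K' → P` with `P ∈ P`, `K' ∈ K`. -/
  resolve : ∀ K0 ∈ K, ∃ K' ∈ K, ∃ P0 ∈ P, ∃ (f : K' ⟶ P0) (g : P0 ⟶ K0)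
    (h : K0 ⟶ K'⟦(1:ℤ)⟧), Triangle.mk f g h ∈ distTriang C

end PaperIS

namespace PaperIS

variable {C : Type u} [Category.{v} C] [Preadditive C] [HasZeroObject C]
  [HasShift C ℤ] [∀ n : ℤ, (CategoryTheory.shiftFunctor C n).Additive] [Pretriangulated C]
  [HasBinaryBiproducts C]

/-- The projective objects of the extriangulated category `H^0(B)`. -/
def projSet (B : Set C) : Set C := {X | IsProjIn B X}

/-- The projective-injective objects of the extriangulated category `H^0(B)`. -/
def projInjSet (B : Set C) : Set C := {X | IsProjIn B X ∧ IsInjIn B X}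

/-- The objects of the ambient category which are `(d+1)`-st syzygies of objects of `A`,
i.e. final terms of `d+1` successive triangles `X_{i+1} → P_i → X_i → ΣX_{i+1}` coming
from conflations of `A` with `P_i ∈ P`. -/
def SyzygySet (A P : Set C) (d : ℕ) : Set C :=
  {X | ∃ Xs Ps : ℕ → C, Xs 0 ∈ A ∧ Nonempty (X ≅ Xs (d+1)) ∧
    ∀ i ≤ d, Ps i ∈ P ∧ Xs i ∈ A ∧ Xs (i+1) ∈ A ∧
      ∃ (f : Xs (i+1) ⟶ Ps i) (g : Ps i ⟶ Xs i) (h : Xs i ⟶ (Xs (i+1))⟦(1:ℤ)⟧),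
        Triangle.mk f g h ∈ distTriang C}

end PaperIS

namespace PaperIS

variable {C : Type u} [Category.{v} C] [Preadditive C] [HasZeroObject C]
  [HasShift C ℤ] [∀ n : ℤ, (CategoryTheory.shiftFunctor C n).Additive] [Pretriangulated C]
  [HasBinaryBiproducts C]

/-- The extriangulated category `H^0(K)` (inherited from the ambient triangulated
category) is Frobenius: enough projectives, enough injectives, and the projectives
coincide with the injectives. -/
def IsFrobeniusIn (B : Set C) : Prop :=
  HasEnoughProjIn B ∧ HasEnoughInjIn B ∧ ∀ X : C, IsProjIn B X ↔ IsInjIn B X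

end PaperIS

namespace PaperIS

section

variable {C : Type u} [Category.{v} C] [Preadditive C] [HasZeroObject C] [HasShift C ℤ]
  [HasBinaryBiproducts C]

lemma IsAdditiveSub.projSet {B : Set C} (hB : IsAdditiveSub B) :
    IsAdditiveSub (projSet B) where
  isoClosed e hX := ⟨hB.isoClosed e hX.1, fun Y hY f => by
    rw [← e.inv_hom_id_assoc f, hX.2 Y hY (e.hom ≫ f), comp_zero]⟩
  zeroMem := ⟨hB.zeroMem, fun _ _ f => (isZero_zero C).eq_of_src f 0⟩
  sumMem hX hY := ⟨hB.sumMem hX.1 hY.1, fun Z hZ f =>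
    biprod.hom_ext' _ _ (by rw [hX.2 Z hZ (biprod.inl ≫ f), comp_zero])
      (by rw [hY.2 Z hZ (biprod.inr ≫ f), comp_zero])⟩
  summandMem hXY := ⟨hB.summandMem hXY.1, fun Z hZ f => by
    rw [← biprod.inl_fst_assoc f, hXY.2 Z hZ (biprod.fst ≫ f), comp_zero]⟩

end

section

open Opposite Pretriangulated.Opposite

variable {C : Type u} [Category.{v} C] [Preadditive C] [HasZeroObject C]
  [HasShift C ℤ] [∀ n : ℤ, (CategoryTheory.shiftFunctor C n).Additive] [Pretriangulated C]

lemma Triangle.hom_shift_obj₁_eq_zero (T : Triangle C) (hT : T ∈ distTriang C) {n₀ n₁ : ℤ}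
    (h : n₀ + 1 = n₁) {X : C} (h₃ : ∀ g : X ⟶ T.obj₃⟦n₀⟧, g = 0)
    (h₂ : ∀ g : X ⟶ T.obj₂⟦n₁⟧, g = 0) (f : X ⟶ T.obj₁⟦n₁⟧) : f = 0 := by
  have hexact := (preadditiveCoyoneda.obj (op X)).homologySequence_exact₁ T hT n₀ n₁ h
  rw [ShortComplex.ab_exact_iff] at hexact
  obtain ⟨g, rfl⟩ := hexact f (h₂ _)
  rw [h₃ g]
  exact map_zero _

lemma Triangle.hom_obj₃_eq_zero (T : Triangle C) (hT : T ∈ distTriang C) {n₀ n₁ : ℤ}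
    (h : n₀ + 1 = n₁) {Y : C} (h₁ : ∀ g : T.obj₁ ⟶ Y⟦n₀⟧, g = 0)
    (h₂ : ∀ g : T.obj₂ ⟶ Y⟦n₁⟧, g = 0) (f : T.obj₃ ⟶ Y⟦n₁⟧) : f = 0 := by
  have hexact := (preadditiveYoneda.obj Y).homologySequence_exact₁ _
    (op_distinguished T hT) n₀ n₁ h
  rw [ShortComplex.ab_exact_iff] at hexact
  obtain ⟨g, rfl⟩ := hexact f (h₂ _)
  rw [h₁ g]
  exact map_zero _

def PosExtVanishing (S T : Set C) : Prop :=
  ∀ X ∈ S, ∀ Y ∈ T, ∀ n : ℤ, 1 ≤ n → ∀ f : X ⟶ Y⟦n⟧, f = 0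

variable {B : Set C}

lemma posExtVanishing_projSet_left (hFrob : IsFrobeniusIn B)
    (hconn : PosExtVanishing (projSet B) (projSet B)) : PosExtVanishing (projSet B) B := by
  intro Q hQ K₀ hK₀ n hn
  induction n, hn using Int.leInduction generalizing K₀ with
  | base => exact hQ.2 K₀ hK₀
  | succ n hn ih =>
    obtain ⟨Q', K₁, hQ', hK₁, a, b, c, hT⟩ := hFrob.2.1 K₀ hK₀
    exact Triangle.hom_shift_obj₁_eq_zero _ hT rfl (ih K₁ hK₁)
      (hconn Q hQ Q' ((hFrob.2.2 Q').2 hQ') (n + 1) (by omega))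

lemma posExtVanishing_projSet_right (hFrob : IsFrobeniusIn B)
    (hconn : PosExtVanishing (projSet B) (projSet B)) : PosExtVanishing B (projSet B) := by
  intro K₀ hK₀ Q hQ n hn
  induction n, hn using Int.leInduction generalizing K₀ with
  | base => exact ((hFrob.2.2 Q).1 hQ).2 K₀ hK₀
  | succ n hn ih =>
    obtain ⟨Q', K₁, hQ', hK₁, a, b, c, hT⟩ := hFrob.1 K₀ hK₀
    exact Triangle.hom_obj₃_eq_zero _ hT rfl (ih K₁ hK₁)
      (hconn Q' hQ' Q hQ (n + 1) (by omega))

end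

variable {C : Type u} [Category.{v} C] [Preadditive C] [HasZeroObject C]
  [HasShift C ℤ] [∀ n : ℤ, (CategoryTheory.shiftFunctor C n).Additive] [Pretriangulated C]
  [HasBinaryBiproducts C]

/-- Let `T_dg` be a pretriangulated dg category (modelled by the ambient
pretriangulated category `C`) and `K` an extension-closed additive subcategory whose
inherited exact structure is Frobenius.  Let `P` be the projectives of `K` and `I ⊆ P` an
additive subcategory which is covariantly finite in `T = H^0(T_dg)`.  If `P` is
connective then `(K,P,I)` is a `d`-precluster tilting triple for every `d ≥ 0`; in
particular `Hom_T(Q, Σ^i K₀) = 0` and `Hom_T(K₀, Σ^i Q) = 0` for all `i ≥ 1`, `Q ∈ P`,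
`K₀ ∈ K`. -/
theorem statement9 (Kset : Set C) (haddK : IsAdditiveSub Kset)
    (hext : Star Kset Kset ⊆ Kset) (hFrob : IsFrobeniusIn Kset)
    (Iset : Set C) (haddI : IsAdditiveSub Iset) (hIP : Iset ⊆ projSet Kset)
    (hIcov : CovFinite Iset (Set.univ : Set C))
    (hPconn : ∀ X ∈ projSet Kset, ∀ Y ∈ projSet Kset, ∀ n : ℤ, 1 ≤ n →
      ∀ f : X ⟶ Y⟦n⟧, f = 0) :
    (∀ d : ℕ, ∃ T : PreclusterTriple C d,
      T.K = Kset ∧ T.P = projSet Kset ∧ T.I = Iset) ∧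
    (∀ n : ℤ, 1 ≤ n → ∀ Q ∈ projSet Kset, ∀ K0 ∈ Kset,
      (∀ f : Q ⟶ K0⟦n⟧, f = 0) ∧ (∀ f : K0 ⟶ Q⟦n⟧, f = 0)) := by
  have hPK := posExtVanishing_projSet_left hFrob hPconn
  have hKP := posExtVanishing_projSet_right hFrob hPconn
  refine ⟨fun d => ⟨{ K := Kset
                      P := projSet Kset
                      I := Iset
                      I_sub_P := hIP
                      P_sub_K := fun _ hQ => hQ.1
                      addK := haddK
                      addP := haddK.projSet
                      addI := haddI
                      connP := hPconn
                      covFin := fun X _ => hIcov X (Set.mem_univ X)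
                      extClosedK := hext
                      vanishPK := hPK
                      vanishKP := hKP
                      resolve := fun K₀ hK₀ => ?_ }, rfl, rfl, rfl⟩,
    fun n hn Q hQ K₀ hK₀ => ⟨hPK Q hQ K₀ hK₀ n hn, hKP K₀ hK₀ Q hQ n hn⟩⟩
  obtain ⟨Q, K₁, hQ, hK₁, a, b, c, hT⟩ := hFrob.1 K₀ hK₀
  exact ⟨K₁, hK₁, Q, hQ, a, b, c, hT⟩

end PaperIS
end

section
/- Let d ≥ 0 and let (K,P,I) be a d-precluster tilting triple such that B' = τ_{≤0} B^{(d+1)}_{K,P,I} is abelian. Then the dg category P is concentrated in degree zero and has weak kernels, and the map sending X ∈ B' to Hom_{B'}(−,X)|_P extends to an exact equivalence of categories F : B' ≃ mod P. -/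
open CategoryTheory Category Limits Pretriangulated ZeroObject

universe v u

namespace PaperIS

variable {C : Type u} [Category.{v} C] [Preadditive C] [HasZeroObject C]
  [HasShift C ℤ] [∀ n : ℤ, (CategoryTheory.shiftFunctor C n).Additive] [Pretriangulated C]
  [HasBinaryBiproducts C]

/-- A complex `0 → K_{d+1} → P_d → ⋯ → P_1 → P_0` in `H^0(K)` with `K_{d+1} ∈ K` and
`P_i ∈ P` for `i ≤ d`; here `Xs (d+1) = K_{d+1}`, `Xs i = P_i` and `gs i : X_{i+1} → X_i`. -/
structure CxData (K P : Set C) (d : ℕ) where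
  Xs : ℕ → C
  gs : ∀ i : ℕ, Xs (i+1) ⟶ Xs i
  memP : ∀ i ≤ d, Xs i ∈ P
  memK : Xs (d+1) ∈ K
  isCx : ∀ i : ℕ, i + 1 ≤ d → gs (i+1) ≫ gs i = 0

/-- The induced complex `(P_0, I) → (P_1, I) → ⋯ → (P_d, I) → (K_{d+1}, I) → 0` of Hom
spaces is exact for every `I ∈ Iset`. -/
def IExactCx {K P : Set C} {d : ℕ} (Iset : Set C) (E : CxData K P d) : Prop :=
  ∀ I0 ∈ Iset, ∀ i ≤ d, ∀ φ : E.Xs (i+1) ⟶ I0,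
    (i + 1 ≤ d → E.gs (i+1) ≫ φ = 0) → ∃ ψ : E.Xs i ⟶ I0, E.gs i ≫ ψ = φ

/-- The induced complex `0 → (P, K_{d+1}) → (P, P_d) → ⋯ → (P, P_0)` of Hom spaces is
exact for every `P ∈ Pset`. -/
def PExactCx {K P : Set C} {d : ℕ} (Pset : Set C) (E : CxData K P d) : Prop :=
  ∀ Q ∈ Pset,
    (∀ φ : Q ⟶ E.Xs (d+1), φ ≫ E.gs d = 0 → φ = 0) ∧
    (∀ i : ℕ, i + 1 ≤ d → ∀ φ : Q ⟶ E.Xs (i+1), φ ≫ E.gs i = 0 →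
      ∃ ψ : Q ⟶ E.Xs (i+2), ψ ≫ E.gs (i+1) = φ)

/-- The dg category with objects `B` (and Hom complexes inherited from the ambient
pretriangulated dg category) is concentrated in degree zero after truncation `τ_{≤0}`,
i.e. all negative-degree cohomologies of Hom complexes vanish. -/
def ConcentratedDegZero (B : Set C) : Prop :=
  ∀ X ∈ B, ∀ Y ∈ B, ∀ n : ℤ, n < 0 → ∀ f : X ⟶ Y⟦n⟧, f = 0

end PaperIS

namespace PaperIS

variable {C : Type u} [Category.{v} C] [Preadditive C] [HasZeroObject C]
  [HasShift C ℤ] [∀ n : ℤ, (CategoryTheory.shiftFunctor C n).Additive] [Pretriangulated C]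
  [HasBinaryBiproducts C]

/-- `f` is a kernel of `g` in the full subcategory on `B`. -/
def IsKernelIn (B : Set C) {X E Y : C} (f : X ⟶ E) (g : E ⟶ Y) : Prop :=
  f ≫ g = 0 ∧ ∀ W ∈ B, ∀ u : W ⟶ E, u ≫ g = 0 → ∃! v : W ⟶ X, v ≫ f = u

/-- `g` is a cokernel of `f` in the full subcategory on `B`. -/
def IsCokernelIn (B : Set C) {X E Y : C} (f : X ⟶ E) (g : E ⟶ Y) : Prop :=
  f ≫ g = 0 ∧ ∀ W ∈ B, ∀ u : E ⟶ W, f ≫ u = 0 → ∃! v : Y ⟶ W, g ≫ v = u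

/-- The exact dg category `τ_{≤0} B` (for `B` extension-closed in the ambient
pretriangulated category) is an abelian category, with all kernel-cokernel pairs as
conflations: it is concentrated in degree zero, the full subcategory on `B` is abelian,
every kernel-cokernel pair in it extends to a triangle of the ambient category (i.e. is a
conflation), and conversely every conflation is a kernel-cokernel pair. -/
def AbelianExact (B : Set C) : Prop :=
  ConcentratedDegZero B ∧
  Nonempty (Abelian (ObjectProperty.FullSubcategory fun X : C => X ∈ B)) ∧
  (∀ ⦃X E Y : C⦄, X ∈ B → E ∈ B → Y ∈ B → ∀ (f : X ⟶ E) (g : E ⟶ Y),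
    IsKernelIn B f g → IsCokernelIn B f g →
      ∃ h : Y ⟶ X⟦(1:ℤ)⟧, Triangle.mk f g h ∈ distTriang C) ∧
  (∀ ⦃X E Y : C⦄ (f : X ⟶ E) (g : E ⟶ Y) (h : Y ⟶ X⟦(1:ℤ)⟧),
    X ∈ B → E ∈ B → Y ∈ B → Triangle.mk f g h ∈ (distTriang C) →
      IsKernelIn B f g ∧ IsCokernelIn B f g)

/-- The additive category `H^0(P)` admits weak kernels. -/
def HasWeakKernelsIn (P : Set C) : Prop :=
  ∀ P1 ∈ P, ∀ P0 ∈ P, ∀ f : P1 ⟶ P0, ∃ P2 ∈ P, ∃ w : P2 ⟶ P1, w ≫ f = 0 ∧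
    ∀ Q ∈ P, ∀ u : Q ⟶ P1, u ≫ f = 0 → ∃ v : Q ⟶ P2, v ≫ w = u

end PaperIS

namespace PaperIS

universe w

variable {C : Type u} [Category.{v} C] [Preadditive C] [HasZeroObject C]
  [HasShift C ℤ] [∀ n : ℤ, (CategoryTheory.shiftFunctor C n).Additive] [Pretriangulated C]
  [HasBinaryBiproducts C]

variable (k : Type w) [CommRing k] [Linear k C]

/-- The category `Mod S` of `k`-linear functors `S^op → Mod k` is modelled by the functor
category `(S)ᵒᵖ ⥤ ModuleCat k` on the full subcategory on `S`. -/
abbrev ModCat (S : Set C) := (ObjectProperty.FullSubcategory fun X : C => X ∈ S)ᵒᵖ ⥤ ModuleCat.{v} k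

/-- The restricted Yoneda functor `X ↦ Hom(-, X)|_S`. -/
def resYoneda (S : Set C) : C ⥤ ModCat k S where
  obj X :=
    { obj := fun P0 => ModuleCat.of k (P0.unop.obj ⟶ X)
      map := fun f => ModuleCat.ofHom (Linear.leftComp k X ((ObjectProperty.ι _).map f.unop))
      map_id := fun P0 => by
        ext g; exact Category.id_comp g
      map_comp := fun f g => by
        ext x
        exact Category.assoc ((ObjectProperty.ι _).map g.unop)
          ((ObjectProperty.ι _).map f.unop) x }
  map {X Y} u :=
    { app := fun P0 => ModuleCat.ofHom (Linear.rightComp k P0.unop.obj u)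
      naturality := fun P0 P1 f => by
        ext x
        exact Category.assoc ((ObjectProperty.ι _).map f.unop) x u }
  map_id X := by
    ext P0 x
    exact Category.comp_id x
  map_comp u v := by
    ext P0 x
    exact (Category.assoc x u v).symm

end PaperIS

namespace PaperIS

variable {C : Type u} [Category.{v} C] [Preadditive C] [HasZeroObject C]
  [HasShift C ℤ] [∀ n : ℤ, (CategoryTheory.shiftFunctor C n).Additive] [Pretriangulated C]
  [HasBinaryBiproducts C]

variable (k : Type w) [CommRing k] [Linear k C]

/-- The morphisms `ι`, `π` of `Mod S` form a short exact sequence (pointwise). -/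
def PtwiseSES {S : Set C} {G₁ G₂ G₃ : ModCat k S} (ι : G₁ ⟶ G₂) (π : G₂ ⟶ G₃) : Prop :=
  ∀ P0, Function.Injective (ι.app P0) ∧ Function.Surjective (π.app P0) ∧
    ∀ y, (π.app P0) y = 0 → ∃ x, (ι.app P0) x = y

/-- A right `S`-module is finitely presented if it admits a presentation by
representable modules. -/
def IsFinitelyPresented (S : Set C) (G : ModCat k S) : Prop :=
  ∃ (P1 P0 : C) (_ : P1 ∈ S) (_ : P0 ∈ S) (f : P1 ⟶ P0)
    (ε : (resYoneda k S).obj P0 ⟶ G),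
    (∀ Q, Function.Surjective (ε.app Q)) ∧
    ∀ Q y, (ε.app Q) y = 0 ↔ ∃ x, (((resYoneda k S).map f).app Q) x = y

end PaperIS

/-!
The subcategory `B = B^{(d+1)}_{K,P,I}` is abelian by hypothesis, and the objects of `P` are
projective in it: `Hom(P, Σ X) = 0` for every `X ∈ K * ΣK * ⋯ * Σ^{d+1} K`, and every short exact
sequence of `B` is a distinguished triangle. Every object of `B` is moreover a quotient of an
object of `P`: it is a quotient of an object of `K` because `Hom(Σ^{≥1} K, B) = 0` (`B` being
concentrated in degree zero), and every `K₀ ∈ K` is a quotient of some `P₀ ∈ P` by the cone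
condition (5). An abelian category in which a class `P` of projectives covers every object is
equivalent, through `X ↦ Hom(-, X)|_P`, to the finitely presented `P`-modules, and `P` has weak
kernels there. Exactness holds because `Hom(P, -)` turns triangles of `B` into short exact
sequences.
-/

namespace PaperIS

lemma exists_comp_eq_of_comp_eq_zero {𝒜 : Type*} [Category 𝒜] [Abelian 𝒜] {Q E X Y : 𝒜}
    [Projective Q] {p : E ⟶ X} (q : Y ⟶ kernel p) [Epi q] (y : Q ⟶ E) (hy : y ≫ p = 0) :
    ∃ x : Q ⟶ Y, x ≫ q ≫ kernel.ι p = y :=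
  ⟨Projective.factorThru (kernel.lift p y hy) q, by simp⟩

lemma nonempty_iso_of_surjective_of_ker_iff (k : Type w) [CommRing k] {J : Type u}
    [Category.{v} J] {F G H : J ⥤ ModuleCat.{v} k} (α : F ⟶ G) (β : F ⟶ H)
    (hα : ∀ j, Function.Surjective (α.app j)) (hβ : ∀ j, Function.Surjective (β.app j))
    (hker : ∀ j x, α.app j x = 0 ↔ β.app j x = 0) : Nonempty (G ≅ H) := by
  have : ∀ j, Epi (α.app j) := fun j => (ModuleCat.epi_iff_surjective _).2 (hα j)
  have : ∀ j, Epi (β.app j) := fun j => (ModuleCat.epi_iff_surjective _).2 (hβ j)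
  have : Epi α := NatTrans.epi_of_epi_app α
  have : Epi β := NatTrans.epi_of_epi_app β
  have hαβ : kernel.ι α ≫ β = 0 := by
    ext j x
    exact (hker j _).1 congr(($(kernel.condition α)).app j x)
  let φ := Abelian.epiDesc α β hαβ
  have hfac : α ≫ φ = β := Abelian.comp_epiDesc α β hαβ
  have : Epi φ := epi_of_epi_fac hfac
  have : ∀ j, Mono (φ.app j) := fun j => by
    refine (ModuleCat.mono_iff_injective _).2 <|
      (injective_iff_map_eq_zero (φ.app j).hom).2 fun y hy => ?_
    obtain ⟨x, rfl⟩ := hα j y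
    exact (hker j x).2 (congr(($hfac).app j x).symm.trans hy)
  have : Mono φ := NatTrans.mono_of_mono_app φ
  have : IsIso φ := isIso_of_mono_of_epi φ
  exact ⟨asIso φ⟩

section Category

variable {C : Type u} [Category.{v} C]

abbrev Bsub (B : Set C) := ObjectProperty.FullSubcategory fun X : C => X ∈ B

structure IsProjectiveGeneratorIn (B P : Set C) : Prop where
  subset : P ⊆ B
  projective : ∀ ⦃Q : C⦄ (hQ : Q ∈ P), Projective (⟨Q, subset hQ⟩ : Bsub B)
  exists_epi : ∀ X : Bsub B, ∃ Q, ∃ hQ : Q ∈ P, ∃ p : (⟨Q, subset hQ⟩ : Bsub B) ⟶ X, Epi p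

lemma IsProjectiveGeneratorIn.exists_comp_hom_eq {B P : Set C} (hP : IsProjectiveGeneratorIn B P)
    {Q : C} (hQ : Q ∈ P) {E X : Bsub B} (e : E ⟶ X) [Epi e]
    (u : Q ⟶ X.obj) : ∃ v : Q ⟶ E.obj, v ≫ e.hom = u := by
  have := hP.projective hQ
  let uh : (⟨Q, hP.subset hQ⟩ : Bsub B) ⟶ X := ObjectProperty.homMk u
  exact ⟨(Projective.factorThru uh e).hom, congr($(Projective.factorThru_comp uh e).hom)⟩

end Category

section Preadditive

variable {C : Type u} [Category.{v} C] [Preadditive C]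

/-- An abelian structure on `Bsub B` whose preadditive structure is the one inherited from `C`,
so that zero morphisms and differences in `Bsub B` are computed in `C`. -/
noncomputable abbrev inducedAbelian {B : Set C} (hB : Nonempty (Abelian (Bsub B))) :
    Abelian (Bsub B) :=
  letI := hB.some
  abelianOfEquivalence (C := Bsub B) (𝟭 (Bsub B))

def IsEpiIn (B : Set C) {X Y : C} (p : X ⟶ Y) : Prop :=
  ∀ Z ∈ B, ∀ ψ : Y ⟶ Z, p ≫ ψ = 0 → ψ = 0

lemma IsEpiIn.comp {B : Set C} {X Y Z : C} {p : X ⟶ Y} {q : Y ⟶ Z} (hp : IsEpiIn B p)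
    (hq : IsEpiIn B q) : IsEpiIn B (p ≫ q) :=
  fun W hW ψ hψ => hq W hW ψ (hp W hW _ (by rwa [← assoc]))

lemma epi_homMk_of_isEpiIn {B : Set C} {X Y : Bsub B} {p : X.obj ⟶ Y.obj}
    (hp : IsEpiIn B p) : Epi (ObjectProperty.homMk p : X ⟶ Y) :=
  ⟨fun {W} ψ ψ' h => ObjectProperty.hom_ext _ <| sub_eq_zero.1 <|
    hp W.obj W.2 (ψ.hom - ψ'.hom)
      (by rw [Preadditive.comp_sub, sub_eq_zero]; exact congr($(h).hom))⟩

lemma isKernelIn_of_mono {B : Set C} {K E Y : Bsub B} (ι : K ⟶ E) (e : E ⟶ Y) [Mono ι]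
    (hιe : ι.hom ≫ e.hom = 0)
    (hlift : ∀ (W : Bsub B) (u : W ⟶ E), u.hom ≫ e.hom = 0 → ∃ v : W ⟶ K, v ≫ ι = u) :
    IsKernelIn B ι.hom e.hom := by
  refine ⟨hιe, fun W hW u hu => ?_⟩
  obtain ⟨v, hv⟩ := hlift ⟨W, hW⟩ (ObjectProperty.homMk u) hu
  refine ⟨v.hom, congr($(hv).hom), fun v' hv' => ?_⟩
  have : (ObjectProperty.homMk v' : (⟨W, hW⟩ : Bsub B) ⟶ K) = v :=
    (cancel_mono ι).1 (ObjectProperty.hom_ext _ (hv'.trans congr($(hv).hom).symm))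
  exact congr($(this).hom)

lemma isCokernelIn_of_epi {B : Set C} {K E Y : Bsub B} (ι : K ⟶ E) (e : E ⟶ Y) [Epi e]
    (hιe : ι.hom ≫ e.hom = 0)
    (hdesc : ∀ (W : Bsub B) (u : E ⟶ W), ι.hom ≫ u.hom = 0 → ∃ v : Y ⟶ W, e ≫ v = u) :
    IsCokernelIn B ι.hom e.hom := by
  refine ⟨hιe, fun W hW u hu => ?_⟩
  obtain ⟨v, hv⟩ := hdesc ⟨W, hW⟩ (ObjectProperty.homMk u) hu
  refine ⟨v.hom, congr($(hv).hom), fun v' hv' => ?_⟩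
  have : (ObjectProperty.homMk v' : Y ⟶ ⟨W, hW⟩) = v :=
    (cancel_epi e).1 (ObjectProperty.hom_ext _ (hv'.trans congr($(hv).hom).symm))
  exact congr($(this).hom)

variable (k : Type w) [CommRing k] [Linear k C]

lemma resYoneda_naturality {S : Set C} {X Y : C}
    (η : (resYoneda k S).obj X ⟶ (resYoneda k S).obj Y)
    (Q Q' : (ObjectProperty.FullSubcategory fun X : C => X ∈ S)ᵒᵖ) (v : Q.unop.obj ⟶ Q'.unop.obj)
    (x : Q'.unop.obj ⟶ X) : η.app Q (v ≫ x) = v ≫ η.app Q' x :=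
  ConcreteCategory.congr_hom (η.naturality (ObjectProperty.homMk v).op) x

namespace IsProjectiveGeneratorIn

variable {B P : Set C} (hP : IsProjectiveGeneratorIn B P)
include hP

lemma hasWeakKernelsIn (hB : Nonempty (Abelian (Bsub B))) : HasWeakKernelsIn P := by
  intro P₁ h₁ P₀ h₀ f
  let := inducedAbelian hB
  let fh : (⟨P₁, hP.subset h₁⟩ : Bsub B) ⟶ ⟨P₀, hP.subset h₀⟩ := ObjectProperty.homMk f
  obtain ⟨P₂, h₂, q, _⟩ := hP.exists_epi (kernel fh)
  have hw : (q ≫ kernel.ι fh) ≫ fh = 0 := by simp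
  refine ⟨P₂, h₂, (q ≫ kernel.ι fh).hom, congr($(hw).hom), fun Q hQ u hu => ?_⟩
  have := hP.projective hQ
  let uh : (⟨Q, hP.subset hQ⟩ : Bsub B) ⟶ ⟨P₁, hP.subset h₁⟩ := ObjectProperty.homMk u
  obtain ⟨x, hx⟩ := exists_comp_eq_of_comp_eq_zero q uh (ObjectProperty.hom_ext _ hu)
  exact ⟨x.hom, congr($(hx).hom)⟩

lemma faithful : (ObjectProperty.ι (fun X : C => X ∈ B) ⋙ resYoneda k P).Faithful where
  map_injective {X Y} φ φ' h := by
    obtain ⟨Q, hQ, p, _⟩ := hP.exists_epi X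
    exact (cancel_epi p).1 <| ObjectProperty.hom_ext _ <|
      congr(($h).app (Opposite.op ⟨Q, hQ⟩) p.hom)

lemma full (hB : Nonempty (Abelian (Bsub B))) :
    (ObjectProperty.ι (fun X : C => X ∈ B) ⋙ resYoneda k P).Full where
  map_surjective {X Y} η := by
    let := inducedAbelian hB
    obtain ⟨Q₀, h₀, p, _⟩ := hP.exists_epi X
    obtain ⟨Q₁, h₁, q, _⟩ := hP.exists_epi (kernel p)
    let t : Q₀ ⟶ Y.obj := η.app (Opposite.op ⟨Q₀, h₀⟩) p.hom
    have hqp : (q ≫ kernel.ι p) ≫ p = 0 := by simp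
    have ht : kernel.ι p ≫ ObjectProperty.homMk t = 0 := by
      refine (cancel_epi q).1 ?_
      rw [comp_zero, ← assoc]
      ext
      change (q ≫ kernel.ι p).hom ≫ t = 0
      rw [← resYoneda_naturality k η (Opposite.op ⟨Q₁, h₁⟩) (Opposite.op ⟨Q₀, h₀⟩),
        ← ObjectProperty.FullSubcategory.comp_hom, hqp]
      exact map_zero _
    refine ⟨Abelian.epiDesc p _ ht, ?_⟩
    ext Q u
    obtain ⟨v, rfl⟩ := hP.exists_comp_hom_eq Q.unop.2 p u
    change (v ≫ p.hom) ≫ (Abelian.epiDesc p _ ht).hom = η.app Q (v ≫ p.hom)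
    rw [resYoneda_naturality k η Q (Opposite.op ⟨Q₀, h₀⟩), assoc]
    exact congr(v ≫ $(Abelian.comp_epiDesc p _ ht).hom)

lemma isFinitelyPresented (hB : Nonempty (Abelian (Bsub B))) (X : Bsub B) :
    IsFinitelyPresented k P ((resYoneda k P).obj X.obj) := by
  let := inducedAbelian hB
  obtain ⟨Q₀, h₀, p, _⟩ := hP.exists_epi X
  obtain ⟨Q₁, h₁, q, _⟩ := hP.exists_epi (kernel p)
  have hqp : (q ≫ kernel.ι p) ≫ p = 0 := by simp
  refine ⟨Q₁, Q₀, h₁, h₀, (q ≫ kernel.ι p).hom, (resYoneda k P).map p.hom,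
    fun Q => hP.exists_comp_hom_eq Q.unop.2 p, fun Q y => ⟨fun hy => ?_, ?_⟩⟩
  · have := hP.projective Q.unop.2
    let yh : (⟨Q.unop.obj, hP.subset Q.unop.2⟩ : Bsub B) ⟶ ⟨Q₀, hP.subset h₀⟩ :=
      ObjectProperty.homMk y
    obtain ⟨x, hx⟩ := exists_comp_eq_of_comp_eq_zero q yh (ObjectProperty.hom_ext _ hy)
    exact ⟨x.hom, congr($(hx).hom)⟩
  · rintro ⟨x, rfl⟩
    exact (assoc _ _ _).trans (congr(x ≫ $(hqp).hom).trans comp_zero)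

lemma exists_iso (hB : Nonempty (Abelian (Bsub B))) {G : ModCat k P}
    (hG : IsFinitelyPresented k P G) : ∃ X : Bsub B, Nonempty ((resYoneda k P).obj X.obj ≅ G) := by
  obtain ⟨P₁, P₀, h₁, h₀, f, ε, hε, hker⟩ := hG
  let := inducedAbelian hB
  let fh : (⟨P₁, hP.subset h₁⟩ : Bsub B) ⟶ ⟨P₀, hP.subset h₀⟩ := ObjectProperty.homMk f
  refine ⟨cokernel fh, nonempty_iso_of_surjective_of_ker_iff k
    ((resYoneda k P).map (cokernel.π fh).hom) ε (fun Q => hP.exists_comp_hom_eq Q.unop.2 _) hε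
    fun Q y => ?_⟩
  rw [hker]
  refine ⟨fun hy => ?_, ?_⟩
  · have := hP.projective Q.unop.2
    let yh : (⟨Q.unop.obj, hP.subset Q.unop.2⟩ : Bsub B) ⟶ ⟨P₀, hP.subset h₀⟩ :=
      ObjectProperty.homMk y
    obtain ⟨x, hx⟩ := exists_comp_eq_of_comp_eq_zero (Abelian.factorThruImage fh) yh
      (ObjectProperty.hom_ext _ hy)
    rw [Abelian.image.fac] at hx
    exact ⟨x.hom, congr($(hx).hom)⟩
  · rintro ⟨x, rfl⟩
    exact (assoc _ _ _).trans (congr(x ≫ $(cokernel.condition fh).hom).trans comp_zero)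

lemma isEquivalence_lift (hB : Nonempty (Abelian (Bsub B))) :
    (ObjectProperty.lift _ (ObjectProperty.ι (fun X : C => X ∈ B) ⋙ resYoneda k P)
      (hP.isFinitelyPresented k hB)).IsEquivalence := by
  have := hP.faithful k
  have := hP.full k hB
  have : (ObjectProperty.lift _ (ObjectProperty.ι (fun X : C => X ∈ B) ⋙ resYoneda k P)
      (hP.isFinitelyPresented k hB)).EssSurj := ⟨fun G => by
    obtain ⟨X, ⟨e⟩⟩ := hP.exists_iso k hB G.2
    exact ⟨X, ⟨ObjectProperty.isoMk _ e⟩⟩⟩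
  exact {}

end IsProjectiveGeneratorIn

end Preadditive

section Shift

variable {C : Type u} [Category.{v} C] [Preadditive C] [HasShift C ℤ]
  [∀ n : ℤ, (CategoryTheory.shiftFunctor C n).Additive]

lemma ConcentratedDegZero.shift_hom_eq_zero {B : Set C} (hB : ConcentratedDegZero B)
    {W Z : C} (hW : W ∈ B) (hZ : Z ∈ B) {s : ℤ} (hs : 1 ≤ s) (g : W⟦s⟧ ⟶ Z) : g = 0 := by
  let e := (shiftFunctorCompIsoId C s (-s) (add_neg_cancel s)).app W
  apply (shiftFunctor C (-s)).map_injective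
  rw [Functor.map_zero, ← cancel_epi e.inv, comp_zero]
  exact hB W hW Z hZ (-s) (by omega) _

end Shift

section Pretriangulated

variable {C : Type u} [Category.{v} C] [Preadditive C] [HasZeroObject C] [HasShift C ℤ]
  [∀ n : ℤ, (CategoryTheory.shiftFunctor C n).Additive] [Pretriangulated C]

lemma iterStar_subset_succ {S : Set C} (hS : (0 : C) ∈ S) (n : ℕ) :
    iterStar S n ⊆ iterStar S (n + 1) := fun X hX =>
  ⟨X, hX, 0, ⟨0, hS, ⟨(isZero_zero C).iso ((shiftFunctor C _).map_isZero (isZero_zero C))⟩⟩,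
    𝟙 X, 0, 0, contractible_distinguished X⟩

lemma subset_iterStar {S : Set C} (hS : (0 : C) ∈ S) : ∀ n, S ⊆ iterStar S n
  | 0 => le_rfl
  | n + 1 => (subset_iterStar hS n).trans (iterStar_subset_succ hS n)

lemma hom_shift_eq_zero_of_distTriang {A X Y Q : C} {a : A ⟶ X} {b : X ⟶ Y}
    {h : Y ⟶ A⟦(1:ℤ)⟧} (hT : Triangle.mk a b h ∈ distTriang C) (m : ℤ)
    (hA : ∀ f : Q ⟶ A⟦m⟧, f = 0) (hY : ∀ f : Q ⟶ Y⟦m⟧, f = 0) (f : Q ⟶ X⟦m⟧) : f = 0 := by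
  obtain ⟨g, hg⟩ := Triangle.coyoneda_exact₂ _ (Triangle.shift_distinguished _ hT m) f (hY _)
  rw [hg, show g = 0 from hA g]
  exact zero_comp

lemma isEpiIn_mor₁ (B : Set C) {T : Triangle C} (hT : T ∈ distTriang C)
    (h₃ : ∀ Z ∈ B, ∀ χ : T.obj₃ ⟶ Z, χ = 0) : IsEpiIn B T.mor₁ := fun Z hZ ψ hψ => by
  obtain ⟨χ, rfl⟩ := Triangle.yoneda_exact₂ _ hT ψ hψ
  rw [h₃ Z hZ χ, comp_zero]

lemma isEpiIn_mor₂ (B : Set C) {T : Triangle C} (hT : T ∈ distTriang C)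
    (h₁ : ∀ Z ∈ B, ∀ χ : T.obj₁⟦(1:ℤ)⟧ ⟶ Z, χ = 0) : IsEpiIn B T.mor₂ :=
  isEpiIn_mor₁ B (rot_of_distTriang _ hT) h₁

lemma exists_isEpiIn_of_mem_iterStar {K B : Set C} (hKB : K ⊆ B) (hB : ConcentratedDegZero B) :
    ∀ (n : ℕ), ∀ X ∈ iterStar K n, ∃ K₀ ∈ K, ∃ c : K₀ ⟶ X, IsEpiIn B c
  | 0, X, hX => ⟨X, hX, 𝟙 X, fun Z _ ψ hψ => by rwa [id_comp] at hψ⟩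
  | n + 1, X, ⟨A, hA, Y, ⟨K₁, hK₁, ⟨e⟩⟩, a, _, _, hT⟩ => by
    obtain ⟨K₀, hK₀, c, hc⟩ := exists_isEpiIn_of_mem_iterStar hKB hB n A hA
    refine ⟨K₀, hK₀, c ≫ a, hc.comp <| isEpiIn_mor₁ B hT fun Z hZ χ => ?_⟩
    exact (cancel_epi e.inv).1 <|
      (hB.shift_hom_eq_zero (hKB hK₁) hZ (by omega) (e.inv ≫ χ)).trans comp_zero.symm

lemma AbelianExact.projective {B : Set C} (hB : AbelianExact B) {Q : C} (hQ : Q ∈ B)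
    (hExt : ∀ X ∈ B, ∀ f : Q ⟶ X⟦(1:ℤ)⟧, f = 0) : Projective (⟨Q, hQ⟩ : Bsub B) where
  factors {E Y} u e _ := by
    let := inducedAbelian hB.2.1
    have hιe : (kernel.ι e).hom ≫ e.hom = 0 := congr($(kernel.condition e).hom)
    have hker := isKernelIn_of_mono (kernel.ι e) e hιe fun _ v hv =>
      ⟨kernel.lift e v (ObjectProperty.hom_ext _ hv), kernel.lift_ι _ _ _⟩
    have hcok := isCokernelIn_of_epi (kernel.ι e) e hιe fun _ v hv =>
      ⟨Abelian.epiDesc e v (ObjectProperty.hom_ext _ hv), Abelian.comp_epiDesc _ _ _⟩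
    obtain ⟨h, hT⟩ := hB.2.2.1 (kernel e).2 E.2 Y.2 _ _ hker hcok
    obtain ⟨v, hv⟩ := Triangle.coyoneda_exact₃ _ hT u.hom (hExt _ (kernel e).2 _)
    exact ⟨ObjectProperty.homMk v, ObjectProperty.hom_ext _ hv.symm⟩

lemma AbelianExact.ptwiseSES (k : Type w) [CommRing k] [Linear k C] {B P : Set C}
    (hB : AbelianExact B) (hPB : P ⊆ B) (hExt : ∀ Q ∈ P, ∀ X ∈ B, ∀ f : Q ⟶ X⟦(1:ℤ)⟧, f = 0)
    {X E Y : C} {f : X ⟶ E} {g : E ⟶ Y} {h : Y ⟶ X⟦(1:ℤ)⟧} (hX : X ∈ B) (hE : E ∈ B)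
    (hY : Y ∈ B) (hT : Triangle.mk f g h ∈ distTriang C) :
    PtwiseSES k ((resYoneda k P).map f) ((resYoneda k P).map g) := by
  obtain ⟨hker, -⟩ := hB.2.2.2 f g h hX hE hY hT
  intro Q
  refine ⟨fun (x x' : Q.unop.obj ⟶ X) hxx => ?_, fun y => ?_, fun (y : Q.unop.obj ⟶ E) hy => ?_⟩
  · obtain ⟨_, _, huniq⟩ := hker.2 _ (hPB Q.unop.2) (x ≫ f) (by rw [assoc, hker.1, comp_zero])
    exact (huniq x rfl).trans (huniq x' hxx.symm).symm
  · obtain ⟨x, hx⟩ := Triangle.coyoneda_exact₃ _ hT y (hExt _ Q.unop.2 _ hX _)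
    exact ⟨x, hx.symm⟩
  · obtain ⟨x, hx, -⟩ := hker.2 _ (hPB Q.unop.2) y hy
    exact ⟨x, hx⟩

end Pretriangulated

namespace PreclusterTriple

variable {C : Type u} [Category.{v} C] [Preadditive C] [HasZeroObject C]
  [HasShift C ℤ] [∀ n : ℤ, (CategoryTheory.shiftFunctor C n).Additive] [Pretriangulated C]
  [HasBinaryBiproducts C] {d : ℕ} (T : PreclusterTriple C d)

lemma K_subset_Bcat (n : ℕ) : T.K ⊆ Bcat T.K T.I n := fun X hX =>
  ⟨subset_iterStar T.addK.zeroMem n hX, fun m hm Y hY f => T.vanishKP X hX Y (T.I_sub_P hY) m hm f⟩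

lemma P_subset_Bcat (n : ℕ) : T.P ⊆ Bcat T.K T.I n := T.P_sub_K.trans (T.K_subset_Bcat n)

lemma hom_shift_iterStar_eq_zero {Q : C} (hQ : Q ∈ T.P) {m : ℤ} (hm : 1 ≤ m) :
    ∀ (n : ℕ), ∀ X ∈ iterStar T.K n, ∀ f : Q ⟶ X⟦m⟧, f = 0
  | 0, X, hX, f => T.vanishPK Q hQ X hX m hm f
  | n + 1, _, ⟨A, hA, Y, ⟨K₁, hK₁, ⟨e⟩⟩, _, _, _, hT⟩, f => by
    refine hom_shift_eq_zero_of_distTriang hT m (hom_shift_iterStar_eq_zero hQ hm n A hA)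
      (fun f => ?_) f
    let e' : Y⟦m⟧ ≅ K₁⟦((n : ℤ) + 1) + m⟧ :=
      (shiftFunctor C m).mapIso e ≪≫ (shiftFunctorAdd' C _ m _ rfl).symm.app K₁
    exact (cancel_mono e'.hom).1 ((T.vanishPK Q hQ K₁ hK₁ _ (by omega) _).trans zero_comp.symm)

lemma ext_P_Bcat_eq_zero {Q : C} (hQ : Q ∈ T.P) {n : ℕ} {X : C} (hX : X ∈ Bcat T.K T.I n)
    (f : Q ⟶ X⟦(1:ℤ)⟧) : f = 0 :=
  T.hom_shift_iterStar_eq_zero hQ le_rfl n X hX.1 f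

lemma exists_P_isEpiIn (hB : ConcentratedDegZero (Bcat T.K T.I (d + 1))) {X : C}
    (hX : X ∈ iterStar T.K (d + 1)) :
    ∃ P₀ ∈ T.P, ∃ p : P₀ ⟶ X, IsEpiIn (Bcat T.K T.I (d + 1)) p := by
  obtain ⟨K₀, hK₀, c, hc⟩ := exists_isEpiIn_of_mem_iterStar (T.K_subset_Bcat _) hB _ X hX
  obtain ⟨K', hK', P₀, hP₀, _, g, _, hT⟩ := T.resolve K₀ hK₀
  refine ⟨P₀, hP₀, g ≫ c, IsEpiIn.comp ?_ hc⟩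
  exact isEpiIn_mor₂ _ hT fun Z hZ χ => hB.shift_hom_eq_zero (T.K_subset_Bcat _ hK') hZ le_rfl χ

lemma isProjectiveGeneratorIn (hB : AbelianExact (Bcat T.K T.I (d + 1))) :
    IsProjectiveGeneratorIn (Bcat T.K T.I (d + 1)) T.P where
  subset := T.P_subset_Bcat _
  projective _ hQ := hB.projective _ fun _ hX => T.ext_P_Bcat_eq_zero hQ hX
  exists_epi X := by
    obtain ⟨P₀, hP₀, p, hp⟩ := T.exists_P_isEpiIn hB.1 X.2.1
    exact ⟨P₀, hP₀, _, epi_homMk_of_isEpiIn hp⟩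

end PreclusterTriple

end PaperIS

namespace PaperIS

variable {C : Type u} [Category.{v} C] [Preadditive C] [HasZeroObject C]
  [HasShift C ℤ] [∀ n : ℤ, (CategoryTheory.shiftFunctor C n).Additive] [Pretriangulated C]
  [HasBinaryBiproducts C]

variable (k : Type w) [CommRing k] [Linear k C]

/-- Let `(K,P,I)` be a `d`-precluster tilting triple such that
`B' = τ_{≤0} B^{(d+1)}_{K,P,I}` is abelian.  Then `P` is concentrated in degree zero and
has weak kernels, and `X ↦ Hom_{B'}(-,X)|_P` extends to an exact equivalence of
categories `F : B' ≃ mod P` onto the finitely presented right `P`-modules. -/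
theorem statement13 (d : ℕ) (T : PreclusterTriple C d)
    (hab : AbelianExact (Bcat T.K T.I (d+1))) :
    -- `P` is concentrated in degree zero
    (∀ X ∈ T.P, ∀ Y ∈ T.P, ∀ n : ℤ, n ≠ 0 → ∀ f : X ⟶ Y⟦n⟧, f = 0) ∧
    -- `P` has weak kernels
    HasWeakKernelsIn T.P ∧
    -- `F` is an exact equivalence `B' ≃ mod P`
    ∃ e : ObjectProperty.FullSubcategory (fun X : C => X ∈ Bcat T.K T.I (d+1)) ≌
        ObjectProperty.FullSubcategory (IsFinitelyPresented k T.P),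
      Nonempty (e.functor ⋙ ObjectProperty.ι _ ≅
        (ObjectProperty.ι fun X : C => X ∈ Bcat T.K T.I (d+1)) ⋙
          resYoneda k T.P) ∧
      (∀ ⦃X E Y : C⦄ (f : X ⟶ E) (g : E ⟶ Y) (h : Y ⟶ X⟦(1:ℤ)⟧),
        X ∈ Bcat T.K T.I (d+1) → E ∈ Bcat T.K T.I (d+1) → Y ∈ Bcat T.K T.I (d+1) →
        Triangle.mk f g h ∈ (distTriang C) →
          PtwiseSES k ((resYoneda k T.P).map f) ((resYoneda k T.P).map g)) := by
  have hP := T.isProjectiveGeneratorIn hab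
  refine ⟨fun X hX Y hY n hn f => ?_, hP.hasWeakKernelsIn hab.2.1, ?_⟩
  · rcases hn.lt_or_gt with hn | hn
    · exact hab.1 X (hP.subset hX) Y (hP.subset hY) n hn f
    · exact T.connP X hX Y hY n hn f
  have := hP.isEquivalence_lift k hab.2.1
  refine ⟨Functor.asEquivalence (ObjectProperty.lift _
    (ObjectProperty.ι (fun X : C => X ∈ Bcat T.K T.I (d + 1)) ⋙ resYoneda k T.P)
    (hP.isFinitelyPresented k hab.2.1)), ⟨Iso.refl _⟩, fun X E Y f g h hX hE hY hT => ?_⟩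
  exact hab.ptwiseSES k hP.subset (fun _ hQ _ hX => T.ext_P_Bcat_eq_zero hQ hX) hX hE hY hT

end PaperIS
end
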